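/- For each fixed s ∈ [0, 1], the map c ↦ g(c, s) is strictly decreasing on (0, ∞); that is, 0 < c₁ < c₂ implies g(c₂, s) < g(c₁, s). -/

import Mathlib

open MeasureTheory ProbabilityTheory

/-!
`(S(c x) - 1) x` is the derivative in `c` of the logistic loss `log (1 + exp (-c x))`, so it is
nondecreasing in `c` for every `x` and strictly increasing when `x ≠ 0`. Hence
`c ↦ -g(c, s)`, its Gaussian average at `x = μᵥ(s) + s Z`, is strictly increasing: the affine
function `z ↦ μᵥ(s) + s z` is not identically zero and the Gaussian charges every open set.
-/

/-- The logistic sigmoid `S(t) = 1/(1 + exp(-t))`. -/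
noncomputable def S (t : ℝ) : ℝ := 1 / (1 + Real.exp (-t))

/-- The standard Gaussian measure on `ℝ`. -/
noncomputable def γ : Measure ℝ := gaussianReal 0 1

/-- The validation mean `μᵥ(s) := √(2(1 - s²))`. -/
noncomputable def μv (s : ℝ) : ℝ := Real.sqrt (2 * (1 - s ^ 2))

/-- `g(c, s) := -E_Z[(S(c(μᵥ(s) + s Z)) - 1)(μᵥ(s) + s Z)]` for a standard Gaussian `Z`. -/
noncomputable def g (c s : ℝ) : ℝ :=
  -∫ z, (S (c * (μv s + s * z)) - 1) * (μv s + s * z) ∂γ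

/-- `σ₀(c) := sup { s ∈ [0,1] : g(c, s) ≥ 0 }`. -/
noncomputable def σ₀ (c : ℝ) : ℝ := sSup {s : ℝ | s ∈ Set.Icc (0 : ℝ) 1 ∧ 0 ≤ g c s}

lemma S_eq_sigmoid : S = Real.sigmoid := funext fun _ => one_div _

section Pointwise

variable {𝕜 : Type*} [Field 𝕜] [LinearOrder 𝕜] [IsStrictOrderedRing 𝕜] {f : 𝕜 → 𝕜} {c₁ c₂ : 𝕜}

lemma Monotone.apply_mul_mul_le (hf : Monotone f) (hc : c₁ ≤ c₂) (x : 𝕜) :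
    f (c₁ * x) * x ≤ f (c₂ * x) * x := by
  rcases le_total 0 x with hx | hx
  · exact mul_le_mul_of_nonneg_right (hf (mul_le_mul_of_nonneg_right hc hx)) hx
  · exact mul_le_mul_of_nonpos_right (hf (mul_le_mul_of_nonpos_right hc hx)) hx

lemma StrictMono.apply_mul_mul_lt (hf : StrictMono f) (hc : c₁ < c₂) {x : 𝕜} (hx : x ≠ 0) :
    f (c₁ * x) * x < f (c₂ * x) * x := by
  rcases hx.lt_or_gt with hx | hx
  · exact mul_lt_mul_of_neg_right (hf (mul_lt_mul_of_neg_right hc hx)) hx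
  · exact mul_lt_mul_of_pos_right (hf (mul_lt_mul_of_pos_right hc hx)) hx

end Pointwise

lemma strictMono_sigmoid_sub_one : StrictMono fun t => Real.sigmoid t - 1 :=
  fun _ _ h => sub_lt_sub_right (Real.sigmoid_strictMono h) 1

lemma integral_lt_integral_of_continuous_of_le_of_exists_lt {α : Type*} [TopologicalSpace α]
    [MeasurableSpace α] {μ : Measure α} [μ.IsOpenPosMeasure] {u v : α → ℝ}
    (hu : Continuous u) (hv : Continuous v) (hui : Integrable u μ) (hvi : Integrable v μ)
    (hle : u ≤ v) (hlt : ∃ x, u x < v x) : ∫ x, u x ∂μ < ∫ x, v x ∂μ := by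
  obtain ⟨x, hx⟩ := hlt
  rw [← sub_pos, ← integral_sub hvi hui]
  exact integral_pos_of_integrable_nonneg_nonzero (hv.sub hu) (hvi.sub hui)
    (fun y => sub_nonneg.2 (hle y)) (sub_pos.2 hx).ne'

section LogisticAverage

variable {μ : Measure ℝ} {X : ℝ → ℝ}

lemma continuous_sigmoid_sub_one_mul (hX : Continuous X) (c : ℝ) :
    Continuous fun z => (Real.sigmoid (c * X z) - 1) * X z :=
  ((continuous_sigmoid.comp (continuous_const.mul hX)).sub continuous_const).mul hX

lemma integrable_sigmoid_sub_one_mul (hX : Continuous X) (hXi : Integrable X μ) (c : ℝ) :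
    Integrable (fun z => (Real.sigmoid (c * X z) - 1) * X z) μ := by
  refine hXi.mono (continuous_sigmoid_sub_one_mul hX c).aestronglyMeasurable
    (ae_of_all _ fun z => ?_)
  have h₀ := Real.sigmoid_pos (c * X z)
  have h₁ := Real.sigmoid_lt_one (c * X z)
  have hbound : ‖Real.sigmoid (c * X z) - 1‖ ≤ 1 := by
    rw [Real.norm_eq_abs, abs_le]
    constructor <;> linarith
  rw [norm_mul]
  exact mul_le_of_le_one_left (norm_nonneg _) hbound

lemma strictMono_integral_sigmoid_sub_one_mul [μ.IsOpenPosMeasure] (hX : Continuous X)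
    (hXi : Integrable X μ) (hX₀ : ∃ z, X z ≠ 0) :
    StrictMono fun c => ∫ z, (Real.sigmoid (c * X z) - 1) * X z ∂μ := by
  intro c₁ c₂ hc
  obtain ⟨z, hz⟩ := hX₀
  exact integral_lt_integral_of_continuous_of_le_of_exists_lt
    (continuous_sigmoid_sub_one_mul hX c₁) (continuous_sigmoid_sub_one_mul hX c₂)
    (integrable_sigmoid_sub_one_mul hX hXi c₁) (integrable_sigmoid_sub_one_mul hX hXi c₂)
    (fun y => strictMono_sigmoid_sub_one.monotone.apply_mul_mul_le hc.le (X y))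
    ⟨z, strictMono_sigmoid_sub_one.apply_mul_mul_lt hc hz⟩

end LogisticAverage

instance : IsProbabilityMeasure γ := inferInstanceAs (IsProbabilityMeasure (gaussianReal 0 1))

instance : γ.IsOpenPosMeasure :=
  (gaussianReal_absolutelyContinuous' 0 one_ne_zero).isOpenPosMeasure

lemma integrable_id_γ : Integrable id γ :=
  (memLp_id_gaussianReal 1).integrable le_rfl

lemma exists_μv_add_mul_ne_zero (s : ℝ) : ∃ z, μv s + s * z ≠ 0 := by
  by_contra! h
  have hμ : μv s = 0 := by simpa using h 0
  have hs : s = 0 := by simpa [hμ] using h 1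
  simp [μv, hs] at hμ

theorem stmt14_general (s : ℝ) (c₁ c₂ : ℝ) (hc : c₁ < c₂) : g c₂ s < g c₁ s := by
  have hX : Continuous fun z => μv s + s * z := by fun_prop
  have hXi : Integrable (fun z => μv s + s * z) γ :=
    (integrable_const _).add (integrable_id_γ.const_mul s)
  simp only [g, S_eq_sigmoid, neg_lt_neg_iff]
  exact strictMono_integral_sigmoid_sub_one_mul hX hXi (exists_μv_add_mul_ne_zero s) hc

/-- For each fixed `s ∈ [0, 1]`, the map `c ↦ g(c, s)` is strictly decreasing on
`(0, ∞)`: `0 < c₁ < c₂` implies `g(c₂, s) < g(c₁, s)`. -/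
theorem stmt14 (s : ℝ) (hs : s ∈ Set.Icc (0 : ℝ) 1) (c₁ c₂ : ℝ)
    (hc₁ : 0 < c₁) (hc : c₁ < c₂) : g c₂ s < g c₁ s :=
  stmt14_general s c₁ c₂ hc
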